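/- Let $V(\omega,\tilde g) = \frac12\langle M\omega,\omega\rangle + \frac12\sum_{i,j=1}^3 \alpha_i \tilde g_{ij}^2$ where $M\in\mathbb{R}^{3\times3}$ is symmetric positive definite and $\alpha_i>0$. Along solutions of the rigid-body system $M\dot\omega = -\omega\times(M\omega) + f$ coupled with the perturbed Poisson equations (20) for $\tilde g_{ij}$, the feedback $f_1 = -k\omega_1 + (\omega\times M\omega)_1 + \alpha_2\tilde g_{23} - \alpha_3\tilde g_{32}$, $f_2 = -k\omega_2 + (\omega\times M\omega)_2 - \alpha_1\tilde g_{13} + \alpha_3\tilde g_{31}$, $f_3 = -k\omega_3 + (\omega\times M\omega)_3 + \alpha_1\tilde g_{12} - \alpha_2\tilde g_{21}$ yields $\dot V = -k(\omega_1^2+\omega_2^2+\omega_3^2) \le 0$. -/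

import Mathlib

/-!
Write `eᵢ` for the standard basis. The Poisson equations say that the rows `g̃ᵢ + eᵢ` of the
attitude matrix obey `d/dt (g̃ᵢ + eᵢ) = (g̃ᵢ + eᵢ) × ω`, so `d/dt |g̃ᵢ|² = 2 ⟨g̃ᵢ, eᵢ × ω⟩`.
The feedback cancels the gyroscopic term and closes the loop to
`M ω̇ = -k ω + ∑ αᵢ eᵢ × g̃ᵢ`. By the cyclic symmetry of the triple product the power
`⟨ω, eᵢ × g̃ᵢ⟩` of each coupling torque is `-⟨g̃ᵢ, eᵢ × ω⟩`, so the coupling terms cancel in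
`V̇` and only the damping `-k |ω|²` survives.
-/

noncomputable def cross (a b : Fin 3 → ℝ) : Fin 3 → ℝ :=
  ![a 1 * b 2 - a 2 * b 1, a 2 * b 0 - a 0 * b 2, a 0 * b 1 - a 1 * b 0]

open Matrix

theorem cross_eq_crossProduct (a b : Fin 3 → ℝ) : cross a b = a ⨯₃ b := rfl

section Derivatives

variable {ι : Type*} [Fintype ι] {x y : ℝ → ι → ℝ} {x' y' : ι → ℝ} {t : ℝ}

theorem HasDerivAt.dotProduct (hx : HasDerivAt x x' t) (hy : HasDerivAt y y' t) :
    HasDerivAt (fun s => x s ⬝ᵥ y s) (x' ⬝ᵥ y t + x t ⬝ᵥ y') t := by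
  have h := HasDerivAt.fun_sum (u := Finset.univ) fun i _ =>
    (hasDerivAt_pi.1 hx i).mul (hasDerivAt_pi.1 hy i)
  simp only [Finset.sum_add_distrib, Pi.mul_apply] at h
  exact h

theorem HasDerivAt.mulVec (M : Matrix ι ι ℝ) (hx : HasDerivAt x x' t) :
    HasDerivAt (fun s => M *ᵥ x s) (M *ᵥ x') t :=
  hasDerivAt_pi.2 fun i => (hasDerivAt_const t (M i)).dotProduct hx |>.congr_deriv (by simp; rfl)

theorem hasDerivAt_mulVec_dotProduct_self {M : Matrix ι ι ℝ} (hM : M.IsSymm)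
    (hx : HasDerivAt x x' t) :
    HasDerivAt (fun s => M *ᵥ x s ⬝ᵥ x s) (2 * (x t ⬝ᵥ M *ᵥ x')) t := by
  refine ((hx.mulVec M).dotProduct hx).congr_deriv ?_
  have hswap : M *ᵥ x' ⬝ᵥ x t = x t ⬝ᵥ M *ᵥ x' := dotProduct_comm _ _
  have hsymm : M *ᵥ x t ⬝ᵥ x' = x t ⬝ᵥ M *ᵥ x' := by
    rw [dotProduct_comm, dotProduct_mulVec, ← mulVec_transpose, hM.eq, dotProduct_comm]
  rw [hswap, hsymm, two_mul]

end Derivatives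

theorem hasDerivAt_dotProduct_self_of_hasDerivAt_cross {x : ℝ → Fin 3 → ℝ} {e w : Fin 3 → ℝ}
    {t : ℝ} (hx : HasDerivAt x ((x t + e) ⨯₃ w) t) :
    HasDerivAt (fun s => x s ⬝ᵥ x s) (2 * (x t ⬝ᵥ e ⨯₃ w)) t := by
  refine (hx.dotProduct hx).congr_deriv ?_
  rw [dotProduct_comm, map_add, LinearMap.add_apply, dotProduct_add, dot_self_cross]
  ring

theorem dotProduct_sum_smul_single_cross (α w : Fin 3 → ℝ) (g : Fin 3 → Fin 3 → ℝ) :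
    w ⬝ᵥ ∑ i, α i • (Pi.single i 1 ⨯₃ g i) = -∑ i, α i * (g i ⬝ᵥ Pi.single i 1 ⨯₃ w) := by
  have hcyclic : ∀ i, g i ⬝ᵥ Pi.single i 1 ⨯₃ w = -(w ⬝ᵥ Pi.single i 1 ⨯₃ g i) := fun i => by
    rw [← triple_product_permutation, ← cross_anticomm, dotProduct_neg]
  simp only [dotProduct_sum, dotProduct_smul, smul_eq_mul, hcyclic, mul_neg,
    Finset.sum_neg_distrib, neg_neg]

theorem feedback_eq_sum_smul_single_cross (k : ℝ) (α w τ : Fin 3 → ℝ) (g : Fin 3 → Fin 3 → ℝ) :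
    ![-k * w 0 + τ 0 + α 1 * g 1 2 - α 2 * g 2 1,
      -k * w 1 + τ 1 - α 0 * g 0 2 + α 2 * g 2 0,
      -k * w 2 + τ 2 + α 0 * g 0 1 - α 1 * g 1 0] =
      -k • w + τ + ∑ i, α i • (Pi.single i 1 ⨯₃ g i) := by
  ext j
  fin_cases j <;> simp [Fin.sum_univ_three, cross_apply] <;> ring

theorem statement_7_general (M : Matrix (Fin 3) (Fin 3) ℝ) (hMsymm : M.IsSymm)
    (α : Fin 3 → ℝ) (k : ℝ) (hk : 0 < k)
    (ω ωd f : ℝ → Fin 3 → ℝ) (gt : ℝ → Fin 3 → Fin 3 → ℝ)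
    (hωd : ∀ t, HasDerivAt ω (ωd t) t)
    -- rigid-body equation  M ω̇ = -ω × (Mω) + f
    (heq : ∀ t, M.mulVec (ωd t) = -(cross (ω t) (M.mulVec (ω t))) + f t)
    -- perturbed Poisson equations (20)
    (h11 : ∀ t, HasDerivAt (fun s => gt s 0 0) (ω t 2 * gt t 0 1 - ω t 1 * gt t 0 2) t)
    (h12 : ∀ t, HasDerivAt (fun s => gt s 0 1) (ω t 0 * gt t 0 2 - ω t 2 * (gt t 0 0 + 1)) t)
    (h13 : ∀ t, HasDerivAt (fun s => gt s 0 2) (ω t 1 * (gt t 0 0 + 1) - ω t 0 * gt t 0 1) t)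
    (h21 : ∀ t, HasDerivAt (fun s => gt s 1 0) (ω t 2 * (gt t 1 1 + 1) - ω t 1 * gt t 1 2) t)
    (h22 : ∀ t, HasDerivAt (fun s => gt s 1 1) (ω t 0 * gt t 1 2 - ω t 2 * gt t 1 0) t)
    (h23 : ∀ t, HasDerivAt (fun s => gt s 1 2) (ω t 1 * gt t 1 0 - ω t 0 * (gt t 1 1 + 1)) t)
    (h31 : ∀ t, HasDerivAt (fun s => gt s 2 0) (ω t 2 * gt t 2 1 - ω t 1 * (gt t 2 2 + 1)) t)
    (h32 : ∀ t, HasDerivAt (fun s => gt s 2 1) (ω t 0 * (gt t 2 2 + 1) - ω t 2 * gt t 2 0) t)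
    (h33 : ∀ t, HasDerivAt (fun s => gt s 2 2) (ω t 1 * gt t 2 0 - ω t 0 * gt t 2 1) t)
    -- the feedback law
    (hf : ∀ t, f t =
      ![-k * ω t 0 + cross (ω t) (M.mulVec (ω t)) 0 + α 1 * gt t 1 2 - α 2 * gt t 2 1,
        -k * ω t 1 + cross (ω t) (M.mulVec (ω t)) 1 - α 0 * gt t 0 2 + α 2 * gt t 2 0,
        -k * ω t 2 + cross (ω t) (M.mulVec (ω t)) 2 + α 0 * gt t 0 1 - α 1 * gt t 1 0])
    (V : ℝ → ℝ)
    (hV : ∀ t, V t = (1 / 2) * (dotProduct (M.mulVec (ω t)) (ω t)) +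
      (1 / 2) * ∑ i, ∑ j, α i * gt t i j ^ 2) :
    ∀ t, HasDerivAt V (-k * (ω t 0 ^ 2 + ω t 1 ^ 2 + ω t 2 ^ 2)) t ∧
      -k * (ω t 0 ^ 2 + ω t 1 ^ 2 + ω t 2 ^ 2) ≤ 0 := by
  intro t
  have hrow : ∀ i, HasDerivAt (fun s => gt s i) ((gt t i + Pi.single i 1) ⨯₃ ω t) t := by
    have := h11 t; have := h12 t; have := h13 t; have := h21 t; have := h22 t; have := h23 t
    have := h31 t; have := h32 t; have := h33 t
    intro i
    rw [← cross_anticomm, hasDerivAt_pi]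
    fin_cases i <;> intro j <;> fin_cases j <;> simp [cross_apply] <;> assumption
  have hVeq : V = fun s => 1 / 2 * (M *ᵥ ω s ⬝ᵥ ω s) + 1 / 2 * ∑ i, α i * (gt s i ⬝ᵥ gt s i) :=
    funext fun s => by simp [hV s, dotProduct, Finset.mul_sum, sq]
  have hderiv := ((hasDerivAt_mulVec_dotProduct_self hMsymm (hωd t)).const_mul (1 / 2)).add
    ((HasDerivAt.fun_sum (u := Finset.univ) fun i _ =>
      (hasDerivAt_dotProduct_self_of_hasDerivAt_cross (hrow i)).const_mul (α i)).const_mul (1 / 2))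
  have hclosed : M *ᵥ ωd t = -k • ω t + ∑ i, α i • (Pi.single i 1 ⨯₃ gt t i) := by
    rw [heq t, hf t, feedback_eq_sum_smul_single_cross, cross_eq_crossProduct]
    abel
  refine ⟨?_, ?_⟩
  · rw [hVeq]
    refine hderiv.congr_deriv ?_
    rw [hclosed, dotProduct_add, dotProduct_smul, dotProduct_sum_smul_single_cross]
    simp only [dotProduct, Fin.sum_univ_three, smul_eq_mul]
    ring
  · exact mul_nonpos_of_nonpos_of_nonneg (neg_nonpos.2 hk.le) (by positivity)

/-- For the rigid-body system `Mω̇ = -ω × (Mω) + f` coupled with the perturbed Poisson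
equations (20), the feedback
`f₁ = -kω₁ + (ω×Mω)₁ + α₂g̃₂₃ - α₃g̃₃₂`, `f₂ = -kω₂ + (ω×Mω)₂ - α₁g̃₁₃ + α₃g̃₃₁`,
`f₃ = -kω₃ + (ω×Mω)₃ + α₁g̃₁₂ - α₂g̃₂₁`
yields `V̇ = -k(ω₁² + ω₂² + ω₃²) ≤ 0` for the Lyapunov function
`V = ½⟨Mω, ω⟩ + ½ ∑ᵢⱼ αᵢ g̃ᵢⱼ²`.  (Indices are `0`-based in this formalization.) -/
theorem statement_7 (M : Matrix (Fin 3) (Fin 3) ℝ) (hM : M.PosDef) (hMsymm : M.IsSymm)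
    (α : Fin 3 → ℝ) (hα : ∀ i, 0 < α i) (k : ℝ) (hk : 0 < k)
    (ω ωd f : ℝ → Fin 3 → ℝ) (gt : ℝ → Fin 3 → Fin 3 → ℝ)
    (hωd : ∀ t, HasDerivAt ω (ωd t) t)
    -- rigid-body equation  M ω̇ = -ω × (Mω) + f
    (heq : ∀ t, M.mulVec (ωd t) = -(cross (ω t) (M.mulVec (ω t))) + f t)
    -- perturbed Poisson equations (20)
    (h11 : ∀ t, HasDerivAt (fun s => gt s 0 0) (ω t 2 * gt t 0 1 - ω t 1 * gt t 0 2) t)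
    (h12 : ∀ t, HasDerivAt (fun s => gt s 0 1) (ω t 0 * gt t 0 2 - ω t 2 * (gt t 0 0 + 1)) t)
    (h13 : ∀ t, HasDerivAt (fun s => gt s 0 2) (ω t 1 * (gt t 0 0 + 1) - ω t 0 * gt t 0 1) t)
    (h21 : ∀ t, HasDerivAt (fun s => gt s 1 0) (ω t 2 * (gt t 1 1 + 1) - ω t 1 * gt t 1 2) t)
    (h22 : ∀ t, HasDerivAt (fun s => gt s 1 1) (ω t 0 * gt t 1 2 - ω t 2 * gt t 1 0) t)
    (h23 : ∀ t, HasDerivAt (fun s => gt s 1 2) (ω t 1 * gt t 1 0 - ω t 0 * (gt t 1 1 + 1)) t)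
    (h31 : ∀ t, HasDerivAt (fun s => gt s 2 0) (ω t 2 * gt t 2 1 - ω t 1 * (gt t 2 2 + 1)) t)
    (h32 : ∀ t, HasDerivAt (fun s => gt s 2 1) (ω t 0 * (gt t 2 2 + 1) - ω t 2 * gt t 2 0) t)
    (h33 : ∀ t, HasDerivAt (fun s => gt s 2 2) (ω t 1 * gt t 2 0 - ω t 0 * gt t 2 1) t)
    -- the feedback law
    (hf : ∀ t, f t =
      ![-k * ω t 0 + cross (ω t) (M.mulVec (ω t)) 0 + α 1 * gt t 1 2 - α 2 * gt t 2 1,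
        -k * ω t 1 + cross (ω t) (M.mulVec (ω t)) 1 - α 0 * gt t 0 2 + α 2 * gt t 2 0,
        -k * ω t 2 + cross (ω t) (M.mulVec (ω t)) 2 + α 0 * gt t 0 1 - α 1 * gt t 1 0])
    (V : ℝ → ℝ)
    (hV : ∀ t, V t = (1 / 2) * (dotProduct (M.mulVec (ω t)) (ω t)) +
      (1 / 2) * ∑ i, ∑ j, α i * gt t i j ^ 2) :
    ∀ t, HasDerivAt V (-k * (ω t 0 ^ 2 + ω t 1 ^ 2 + ω t 2 ^ 2)) t ∧
      -k * (ω t 0 ^ 2 + ω t 1 ^ 2 + ω t 2 ^ 2) ≤ 0 :=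
  statement_7_general M hMsymm α k hk ω ωd f gt hωd heq h11 h12 h13 h21 h22 h23 h31 h32 h33 hf V hV
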